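/- Let (V, ω) be a finite-dimensional real symplectic vector space, g an inner product, A = (g♯)⁻¹ ∘ ω♯, and P the positive-definite symmetric square root of A∘A*. Then J = P⁻¹∘A satisfies J² = −Id, ω(J·, J·) = ω(·, ·), and ω(v, Jv) > 0 for all v ≠ 0; i.e., J is an ω-compatible complex structure on V. -/
import Mathlib


open RealInnerProductSpace

/-- with `A` as in the polar decomposition construction
(`⟪A u, v⟫ = ω u v`), `P` the positive-definite symmetric square root of
`A ∘ A*`, and `J` determined by `P ∘ J = A` (i.e. `J = P⁻¹ ∘ A`), the map `J`
satisfies `J² = −Id`, `ω(J·, J·) = ω(·,·)`, and `ω(v, Jv) > 0` for `v ≠ 0`: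
`J` is an `ω`-compatible complex structure. -/
theorem stmt4 {V : Type*} [NormedAddCommGroup V] [InnerProductSpace ℝ V]
    [FiniteDimensional ℝ V]
    (ω : V →ₗ[ℝ] V →ₗ[ℝ] ℝ)
    (halt : ∀ v, ω v v = 0)
    (hnondeg : ∀ u, u ≠ 0 → ∃ v, ω u v ≠ 0)
    (A P J : V →ₗ[ℝ] V)
    (hA : ∀ u v, ⟪A u, v⟫ = ω u v)
    (hPsymm : ∀ u v, ⟪P u, v⟫ = ⟪u, P v⟫)
    (hPpos : ∀ v, v ≠ 0 → 0 < ⟪P v, v⟫)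
    (hPsq : P ∘ₗ P = A ∘ₗ LinearMap.adjoint A)
    (hPJ : P ∘ₗ J = A) :
    (J ∘ₗ J = -LinearMap.id) ∧
    (∀ u v, ω (J u) (J v) = ω u v) ∧
    (∀ v, v ≠ 0 → 0 < ω v (J v)) := by
  -- ω is skew
  have hskew : ∀ u v, ω u v = -ω v u := by
    intro u v
    have h := halt (u + v)
    simp only [map_add, LinearMap.add_apply, halt] at h
    linarith
  -- adjoint of A is -A
  have hAadj : LinearMap.adjoint A = -A := by
    apply LinearMap.ext
    intro v
    apply ext_inner_right ℝ
    intro w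
    rw [LinearMap.adjoint_inner_left]
    rw [real_inner_comm, hA, hskew, ← hA, LinearMap.neg_apply,
      inner_neg_left, real_inner_comm]
  -- P² = -A²
  have hPsq' : P ∘ₗ P = -(A ∘ₗ A) := by
    rw [hPsq, hAadj]; ext v; simp
  -- A injective
  have hAinj : Function.Injective A := by
    rw [← LinearMap.ker_eq_bot, LinearMap.ker_eq_bot']
    intro u hu
    by_contra h
    obtain ⟨v, hv⟩ := hnondeg u h
    exact hv (by rw [← hA, hu, inner_zero_left])
  -- P injective
  have hPinj : Function.Injective P := by
    rw [← LinearMap.ker_eq_bot, LinearMap.ker_eq_bot']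
    intro u hu
    by_contra h
    have := hPpos u h
    rw [hu, inner_zero_left] at this
    exact lt_irrefl 0 this
  have hPsymm' : P.IsSymmetric := fun u v => hPsymm u v
  -- if P² w = μ² w with μ > 0 then P w = μ w
  have hsqrt : ∀ (μ : ℝ), 0 < μ → ∀ w : V, P (P w) = (μ * μ) • w → P w = μ • w := by
    intro μ hμ w hw
    by_contra h
    set u := P w - μ • w with hu
    have hune : u ≠ 0 := fun h0 => h (by rw [← sub_eq_zero]; exact h0)
    have hPu : P u = -μ • u := by
      simp only [hu, map_sub, map_smul, hw]
      module
    have h1 := hPpos u hune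
    rw [hPu] at h1
    have h2 : (0:ℝ) < ⟪u, u⟫ :=
      lt_of_le_of_ne real_inner_self_nonneg
        (fun h0 => hune (inner_self_eq_zero.mp h0.symm))
    rw [inner_smul_left] at h1
    simp only [RCLike.star_def, starRingEnd_apply, star_trivial] at h1
    nlinarith
  -- A commutes with P² = -A²
  have hcomm2 : ∀ w, P (P (A w)) = A (P (P w)) := by
    intro w
    have h1 := LinearMap.congr_fun hPsq' (A w)
    have h2 := LinearMap.congr_fun hPsq' w
    simp only [LinearMap.comp_apply, LinearMap.neg_apply] at h1 h2
    rw [h1, h2, map_neg]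
  -- P commutes with A, via the spectral theorem
  have hcomm : ∀ v, P (A v) = A (P v) := by
    have htop : (⨆ μ, Module.End.eigenspace P μ) = ⊤ := by
      have := hPsymm'.orthogonalComplement_iSup_eigenspaces_eq_bot
      rwa [Submodule.orthogonal_eq_bot_iff] at this
    have hle : (⨆ μ, Module.End.eigenspace P μ) ≤
        LinearMap.ker (P ∘ₗ A - A ∘ₗ P) := by
      apply iSup_le
      intro μ v hv
      rw [Module.End.mem_eigenspace_iff] at hv
      rcases eq_or_ne v 0 with rfl | hvne
      · simp
      · have hμ : 0 < μ := by
          have h1 := hPpos v hvne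
          rw [hv, inner_smul_left] at h1
          simp only [RCLike.star_def, starRingEnd_apply, star_trivial] at h1
          have h2 : (0:ℝ) < ⟪v, v⟫ :=
            lt_of_le_of_ne real_inner_self_nonneg
              (fun h0 => hvne (inner_self_eq_zero.mp h0.symm))
          nlinarith
        have hAv : P (P (A v)) = (μ * μ) • A v := by
          simp only [hcomm2, hv, map_smul]
          module
        have := hsqrt μ hμ (A v) hAv
        simp only [LinearMap.mem_ker, LinearMap.sub_apply, LinearMap.comp_apply,
          this, hv, map_smul, sub_self]
    intro v
    have hv : v ∈ LinearMap.ker (P ∘ₗ A - A ∘ₗ P) := hle (htop ▸ Submodule.mem_top)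
    rw [LinearMap.mem_ker, LinearMap.sub_apply, LinearMap.comp_apply,
      LinearMap.comp_apply, sub_eq_zero] at hv
    exact hv
  -- A ∘ J = -P
  have hAJ : ∀ v, A (J v) = -P v := by
    intro v
    apply hPinj
    have h1 : P (A (J v)) = A (P (J v)) := hcomm (J v)
    have h2 : P (J v) = A v := LinearMap.congr_fun hPJ v
    have h3 := LinearMap.congr_fun hPsq' v
    simp only [LinearMap.comp_apply, LinearMap.neg_apply] at h3
    rw [h1, h2, map_neg, h3, neg_neg]
  -- J injective
  have hJinj : Function.Injective J := by
    intro x y hxy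
    apply hAinj
    rw [← LinearMap.congr_fun hPJ x, ← LinearMap.congr_fun hPJ y,
      LinearMap.comp_apply, LinearMap.comp_apply, hxy]
  refine ⟨?_, ?_, ?_⟩
  · -- J² = -id
    apply LinearMap.ext
    intro v
    apply hPinj
    have h1 : P (J (J v)) = A (J v) := LinearMap.congr_fun hPJ (J v)
    simp only [LinearMap.comp_apply, LinearMap.neg_apply, LinearMap.id_apply]
    rw [h1, hAJ, map_neg]
  · intro u v
    rw [← hA, hAJ, ← hA]
    have h2 : P (J v) = A v := LinearMap.congr_fun hPJ v
    rw [inner_neg_left, hPsymm, h2, real_inner_comm, hA v u, hskew v u, neg_neg]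
    exact (hA u v).symm
  · intro v hv
    have hJv : J v ≠ 0 := fun h => hv (hJinj (by rw [h, map_zero]))
    have h2 : P (J v) = A v := LinearMap.congr_fun hPJ v
    rw [← hA, ← h2]
    exact hPpos (J v) hJv
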